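/- arXiv:2509.25136 — 2 statements merged into one kernel-verified Lean document; each statement's English description precedes it below -/
import Mathlib

section
/- Let X be an N×I real matrix of rank R and M an uncentered whitening matrix for X (Mᵀ Xᵀ X M = N Ī_R, range(M) = row(X)). Then for any I×O real matrix W and any P ≥ 1, Σ_{i=1}^P σ_i²(XW) = N · Σ_{i=1}^P σ_i²(M⁺ W). -/
open Matrix

/-- Restores the lemma removed from Mathlib: `Aᵀ * A` is Hermitian for a real matrix. -/
theorem Matrix.isHermitian_transpose_mul_self {m n : Type*} [Fintype m] (A : Matrix m n ℝ) :
    (Aᵀ * A).IsHermitian := by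
  simpa [Matrix.conjTranspose_eq_transpose_of_trivial] using Matrix.isHermitian_conjTranspose_mul_self A

/-- The singular values of a real matrix, in nonincreasing order, obtained as the
square roots of the eigenvalues of `Aᵀ * A`. -/
noncomputable def svals {M N : ℕ} (A : Matrix (Fin M) (Fin N) ℝ) : Fin N → ℝ :=
  fun i =>
    Real.sqrt ((Matrix.isHermitian_transpose_mul_self A).eigenvalues
      (Tuple.sort ((Matrix.isHermitian_transpose_mul_self A).eigenvalues) i.rev))

/-- `Ī_R`: the `I×I` matrix equal to the identity on the first `R` coordinates and zero
elsewhere. -/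
def Ibar (I R : ℕ) : Matrix (Fin I) (Fin I) ℝ :=
  Matrix.of fun i j => if i = j ∧ (i : ℕ) < R then (1 : ℝ) else 0

/-- `Mp` is the Moore–Penrose pseudoinverse of `M` (the four Penrose conditions). -/
def IsMoorePenrose {I : ℕ} (M Mp : Matrix (Fin I) (Fin I) ℝ) : Prop :=
  M * Mp * M = M ∧ Mp * M * Mp = Mp ∧ (M * Mp)ᵀ = M * Mp ∧ (Mp * M)ᵀ = Mp * M

/-!
Since `M * Mp` is the orthogonal projector onto `range M = row X`, we have `X = X * M * Mp`, hence
`Xᵀ X = Mpᵀ (Mᵀ Xᵀ X M) Mp = N • Mpᵀ Ī Mp`. The columns of `M` beyond `R` lie in `row X` and are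
killed by `X`, so they vanish, which gives `Ī * Mp = Mp` and `Xᵀ X = N • Mpᵀ Mp`. Thus the Gram
matrices of `X * W` and `Mp * W` differ by the factor `N`, and so do their sorted eigenvalues,
which are the squared singular values.
-/

theorem Tuple.comp_sort_eq_of_map_univ_eq {α : Type*} [LinearOrder α] {n : ℕ} {f g : Fin n → α}
    (h : Finset.univ.val.map f = Finset.univ.val.map g) : f ∘ Tuple.sort f = g ∘ Tuple.sort g := by
  have hperm : ∀ k : Fin n → α, (List.ofFn (k ∘ Tuple.sort k)).Perm (List.ofFn k) := by
    intro k
    rw [← Multiset.coe_eq_coe, ← Fin.univ_val_map, ← Fin.univ_val_map, ← Multiset.map_map,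
      Multiset.map_univ_val_equiv]
  have hfg : (List.ofFn f).Perm (List.ofFn g) := by
    rw [← Multiset.coe_eq_coe, ← Fin.univ_val_map, ← Fin.univ_val_map, h]
  exact List.ofFn_injective <| List.Perm.eq_of_sortedLE (Tuple.monotone_sort f).sortedLE_ofFn
    (Tuple.monotone_sort g).sortedLE_ofFn <| (hperm f).trans <| hfg.trans (hperm g).symm

theorem Tuple.comp_sort_comp_of_monotone {α β : Type*} [LinearOrder α] [LinearOrder β] {n : ℕ}
    {φ : α → β} (hφ : Monotone φ) (f : Fin n → α) :
    (φ ∘ f) ∘ Tuple.sort (φ ∘ f) = φ ∘ f ∘ Tuple.sort f :=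
  (Tuple.comp_sort_eq_comp_iff_monotone.mpr (hφ.comp (Tuple.monotone_sort f))).symm

theorem Matrix.IsHermitian.map_eigenvalues_smul {n : Type*} [Fintype n] [DecidableEq n]
    {A : Matrix n n ℝ} (hA : A.IsHermitian) (c : ℝ) (hcA : (c • A).IsHermitian) :
    Finset.univ.val.map hcA.eigenvalues = Finset.univ.val.map (fun i => c * hA.eigenvalues i) := by
  have h := hA.charpoly_cfc_eq (c * ·)
  rw [cfc_const_mul_id c A hA.isSelfAdjoint] at h
  have h2 := hcA.roots_charpoly_eq_eigenvalues
  rw [h, Polynomial.roots_prod _ _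
    (Finset.prod_ne_zero_iff.mpr fun i _ => Polynomial.X_sub_C_ne_zero _)] at h2
  simp only [Polynomial.roots_X_sub_C, Multiset.bind_singleton] at h2
  simpa [Function.comp_def] using h2.symm

theorem Matrix.IsHermitian.eigenvalues_comp_sort_of_eq_smul {n : ℕ}
    {A C : Matrix (Fin n) (Fin n) ℝ} (hA : A.IsHermitian) (hC : C.IsHermitian) {c : ℝ}
    (hc : 0 ≤ c) (h : C = c • A) :
    hC.eigenvalues ∘ Tuple.sort hC.eigenvalues =
      (c * ·) ∘ hA.eigenvalues ∘ Tuple.sort hA.eigenvalues := by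
  subst h
  rw [Tuple.comp_sort_eq_of_map_univ_eq (hA.map_eigenvalues_smul c hC)]
  exact Tuple.comp_sort_comp_of_monotone (monotone_mul_left_of_nonneg hc) _

theorem svals_sq_eq_of_transpose_mul_self_eq_smul {m k n : ℕ} {A : Matrix (Fin m) (Fin n) ℝ}
    {B : Matrix (Fin k) (Fin n) ℝ} {c : ℝ} (hc : 0 ≤ c) (h : Aᵀ * A = c • (Bᵀ * B)) (i : Fin n) :
    svals A i ^ 2 = c * svals B i ^ 2 := by
  have hB := isHermitian_transpose_mul_self B
  have hsort := congrFun (hB.eigenvalues_comp_sort_of_eq_smul (isHermitian_transpose_mul_self A)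
    hc h) i.rev
  simp only [Function.comp_apply] at hsort
  have hnonneg : ∀ j, 0 ≤ hB.eigenvalues j := eigenvalues_conjTranspose_mul_self_nonneg B
  rw [svals, svals, hsort, Real.sq_sqrt (mul_nonneg hc (hnonneg _)), Real.sq_sqrt (hnonneg _)]

theorem Matrix.exists_eq_mul_of_range_mulVecLin_le {R : Type*} [CommRing R] {l m n : Type*}
    [Fintype l] [Fintype n] [DecidableEq n] {A : Matrix m n R} {B : Matrix m l R}
    (h : LinearMap.range A.mulVecLin ≤ LinearMap.range B.mulVecLin) :
    ∃ C : Matrix l n R, A = B * C := by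
  choose v hv using fun j => h ⟨Pi.single j 1, rfl⟩
  refine ⟨(of v)ᵀ, ext fun i j => ?_⟩
  have hcol := congrFun (hv j) i
  rw [mulVecLin_apply, mulVecLin_apply, mulVec_single_one] at hcol
  simpa [mul_apply, mulVec, dotProduct] using hcol.symm

section Whitening

variable {m n : Type*} [Fintype m] [Fintype n]
  {X : Matrix m n ℝ} {M Mp E : Matrix n n ℝ} {c : ℝ}

theorem Matrix.mul_mul_eq_self_of_range_transpose_le [DecidableEq m]
    (hX : LinearMap.range Xᵀ.mulVecLin ≤ LinearMap.range M.mulVecLin)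
    (h1 : M * Mp * M = M) (h3 : (M * Mp)ᵀ = M * Mp) : X * M * Mp = X := by
  obtain ⟨Z, hZ⟩ := exists_eq_mul_of_range_mulVecLin_le hX
  calc X * M * Mp = (M * Mp * Xᵀ)ᵀ := by
        rw [transpose_mul, h3, transpose_transpose, Matrix.mul_assoc]
    _ = X := by rw [hZ, ← Matrix.mul_assoc, h1, ← hZ, transpose_transpose]

theorem Matrix.mul_mul_one_sub_eq_zero [DecidableEq n] (hW : Mᵀ * (Xᵀ * X) * M = c • E)
    (hE : IsIdempotentElem E) (hEs : E.IsSymm) : X * M * (1 - E) = 0 := by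
  have hEE : (1 - E) * E = 0 := by rw [sub_mul, one_mul, hE.eq, sub_self]
  rw [← conjTranspose_mul_self_eq_zero, conjTranspose_eq_transpose_of_trivial]
  calc (X * M * (1 - E))ᵀ * (X * M * (1 - E))
        = (1 - E)ᵀ * (Mᵀ * (Xᵀ * X) * M) * (1 - E) := by
        simp only [transpose_mul, Matrix.mul_assoc]
    _ = 0 := by rw [hW, transpose_sub, transpose_one, hEs.eq, Matrix.mul_smul, hEE, smul_zero,
        Matrix.zero_mul]

theorem Matrix.mul_eq_zero_of_mul_mul_eq_zero [DecidableEq n] {l : Type*} {K : Matrix n l ℝ}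
    (hM : LinearMap.range M.mulVecLin ≤ LinearMap.range Xᵀ.mulVecLin) (h : X * M * K = 0) :
    M * K = 0 := by
  obtain ⟨Y, hY⟩ := exists_eq_mul_of_range_mulVecLin_le hM
  rw [← conjTranspose_mul_self_eq_zero, conjTranspose_eq_transpose_of_trivial]
  calc (M * K)ᵀ * (M * K) = Kᵀ * Yᵀ * (X * M * K) := by
        nth_rewrite 1 [hY]
        simp only [transpose_mul, transpose_transpose, Matrix.mul_assoc]
    _ = 0 := by rw [h, Matrix.mul_zero]

theorem Matrix.mul_pinv_eq_pinv_of_mul_eq (hME : M * E = M) (hEs : E.IsSymm)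
    (h2 : Mp * M * Mp = Mp) (h4 : (Mp * M)ᵀ = Mp * M) : E * Mp = Mp := by
  have hMt : E * Mᵀ = Mᵀ := by rw [← hEs.eq, ← transpose_mul, hME]
  calc E * Mp = E * Mᵀ * Mpᵀ * Mp := by
        rw [Matrix.mul_assoc E, ← transpose_mul, h4, Matrix.mul_assoc E, h2]
    _ = Mp := by rw [hMt, ← transpose_mul, h4, h2]

theorem Matrix.transpose_mul_self_eq_smul_of_whitening [DecidableEq m] [DecidableEq n]
    (hW : Mᵀ * (Xᵀ * X) * M = c • E) (hE : IsIdempotentElem E) (hEs : E.IsSymm)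
    (hrange : LinearMap.range M.mulVecLin = LinearMap.range Xᵀ.mulVecLin)
    (h1 : M * Mp * M = M) (h2 : Mp * M * Mp = Mp) (h3 : (M * Mp)ᵀ = M * Mp)
    (h4 : (Mp * M)ᵀ = Mp * M) : Xᵀ * X = c • (Mpᵀ * Mp) := by
  have hX : X * M * Mp = X := mul_mul_eq_self_of_range_transpose_le hrange.ge h1 h3
  have hME : M * E = M := by
    have hker := mul_eq_zero_of_mul_mul_eq_zero hrange.le (mul_mul_one_sub_eq_zero hW hE hEs)
    rwa [Matrix.mul_sub, Matrix.mul_one, sub_eq_zero, eq_comm] at hker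
  have hEMp : E * Mp = Mp := mul_pinv_eq_pinv_of_mul_eq hME hEs h2 h4
  calc Xᵀ * X = Mpᵀ * (Mᵀ * (Xᵀ * X) * M) * Mp := by
        conv_lhs => rw [← hX]
        simp only [transpose_mul, Matrix.mul_assoc]
    _ = c • (Mpᵀ * Mp) := by rw [hW, Matrix.mul_smul, Matrix.smul_mul, Matrix.mul_assoc, hEMp]

end Whitening

theorem Ibar_eq_diagonal (I R : ℕ) :
    Ibar I R = diagonal fun i : Fin I => if (i : ℕ) < R then (1 : ℝ) else 0 := by
  ext i j
  by_cases h : i = j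
  · subst h; simp [Ibar]
  · simp [Ibar, h]

theorem Ibar_isIdempotentElem (I R : ℕ) : IsIdempotentElem (Ibar I R) := by
  rw [IsIdempotentElem, Ibar_eq_diagonal, diagonal_mul_diagonal]
  congr 1; ext i; split_ifs <;> norm_num

theorem Ibar_isSymm (I R : ℕ) : (Ibar I R).IsSymm := by
  rw [Ibar_eq_diagonal]; exact isSymm_diagonal _

theorem sum_sq_svals_eq_general {N I O R : ℕ}
    (X : Matrix (Fin N) (Fin I) ℝ)
    (M Mp : Matrix (Fin I) (Fin I) ℝ)
    (hW : Mᵀ * (Xᵀ * X) * M = (N : ℝ) • Ibar I R)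
    (hrange : LinearMap.range M.mulVecLin = LinearMap.range Xᵀ.mulVecLin)
    (hMp : IsMoorePenrose M Mp)
    (W : Matrix (Fin I) (Fin O) ℝ) (P : ℕ) :
    ∑ i ∈ Finset.univ.filter (fun i : Fin O => (i : ℕ) < P), (svals (X * W) i) ^ 2
      = (N : ℝ) *
        ∑ i ∈ Finset.univ.filter (fun i : Fin O => (i : ℕ) < P), (svals (Mp * W) i) ^ 2 := by
  obtain ⟨h1, h2, h3, h4⟩ := hMp
  have hgram : Xᵀ * X = (N : ℝ) • (Mpᵀ * Mp) :=
    transpose_mul_self_eq_smul_of_whitening hW (Ibar_isIdempotentElem I R) (Ibar_isSymm I R)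
      hrange h1 h2 h3 h4
  have hgramW : (X * W)ᵀ * (X * W) = (N : ℝ) • ((Mp * W)ᵀ * (Mp * W)) := by
    calc (X * W)ᵀ * (X * W) = Wᵀ * (Xᵀ * X) * W := by
          simp only [transpose_mul, Matrix.mul_assoc]
      _ = (N : ℝ) • ((Mp * W)ᵀ * (Mp * W)) := by
        simp only [hgram, transpose_mul, Matrix.mul_smul, Matrix.smul_mul, Matrix.mul_assoc]
  rw [Finset.mul_sum]
  exact Finset.sum_congr rfl fun i _ =>
    svals_sq_eq_of_transpose_mul_self_eq_smul (Nat.cast_nonneg N) hgramW i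

theorem sum_sq_svals_eq {N I O R : ℕ}
    (X : Matrix (Fin N) (Fin I) ℝ) (hR : X.rank = R)
    (M Mp : Matrix (Fin I) (Fin I) ℝ)
    (hW : Mᵀ * (Xᵀ * X) * M = (N : ℝ) • Ibar I R)
    (hrange : LinearMap.range M.mulVecLin = LinearMap.range Xᵀ.mulVecLin)
    (hMp : IsMoorePenrose M Mp)
    (W : Matrix (Fin I) (Fin O) ℝ) (P : ℕ) (hP : 1 ≤ P) :
    ∑ i ∈ Finset.univ.filter (fun i : Fin O => (i : ℕ) < P), (svals (X * W) i) ^ 2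
      = (N : ℝ) *
        ∑ i ∈ Finset.univ.filter (fun i : Fin O => (i : ℕ) < P), (svals (Mp * W) i) ^ 2 :=
  sum_sq_svals_eq_general X M Mp hW hrange hMp W P
end

section
/- (Eckart–Young–Mirsky, Frobenius norm) For any real M×N matrix A with singular values σ_1 ≥ … ≥ σ_r and any P < r, the best rank-P approximation of A in Frobenius norm is the SVD truncation T_P(A), and min_{rank(B) ≤ P} ‖A − B‖_F² = Σ_{i=P+1}^r σ_i². -/
open Matrix

/-- Squared Frobenius norm of a matrix. -/
def frobSq {m n : Type*} [Fintype m] [Fintype n] (A : Matrix m n ℝ) : ℝ :=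
  ∑ i, ∑ j, (A i j) ^ 2

/-- Rectangular "diagonal" matrix with entries `s 0, s 1, …` on the main diagonal. -/
def rectDiag (I O : ℕ) (s : ℕ → ℝ) : Matrix (Fin I) (Fin O) ℝ :=
  Matrix.of fun i j => if (i : ℕ) = (j : ℕ) then s (i : ℕ) else 0


lemma frobSq_eq_trace {m n : Type*} [Fintype m] [Fintype n] (A : Matrix m n ℝ) :
    frobSq A = Matrix.trace (Aᵀ * A) := by
  simp [frobSq, Matrix.trace, Matrix.mul_apply, Matrix.diag, pow_two]
  rw [Finset.sum_comm]

lemma frobSq_nonneg {m n : Type*} [Fintype m] [Fintype n] (A : Matrix m n ℝ) :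
    0 ≤ frobSq A := by
  apply Finset.sum_nonneg; intro i _; apply Finset.sum_nonneg; intro j _; positivity

lemma frobSq_transpose {m n : Type*} [Fintype m] [Fintype n] (A : Matrix m n ℝ) :
    frobSq Aᵀ = frobSq A := by
  rw [frobSq, frobSq, Finset.sum_comm]; rfl

lemma frobSq_mul_left {m n : Type*} [Fintype m] [Fintype n] [DecidableEq m]
    (U : Matrix m m ℝ) (hU : Uᵀ * U = 1) (X : Matrix m n ℝ) :
    frobSq (U * X) = frobSq X := by
  rw [frobSq_eq_trace, frobSq_eq_trace, Matrix.transpose_mul, Matrix.mul_assoc,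
    ← Matrix.mul_assoc Uᵀ, hU, Matrix.one_mul]

lemma frobSq_mul_right {m n : Type*} [Fintype m] [Fintype n] [DecidableEq n]
    (V : Matrix n n ℝ) (hV : Vᵀ * V = 1) (X : Matrix m n ℝ) :
    frobSq (X * Vᵀ) = frobSq X := by
  rw [← frobSq_transpose (X * Vᵀ), Matrix.transpose_mul, Matrix.transpose_transpose,
    frobSq_mul_left V hV, frobSq_transpose]

lemma frobSq_mul_isometry_le {m n k : Type*} [Fintype m] [Fintype n] [Fintype k] [DecidableEq k]
    (C : Matrix m n ℝ) (W : Matrix n k ℝ) (hW : Wᵀ * W = 1) :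
    frobSq (C * W) ≤ frobSq C := by
  have key : frobSq (C * W) + frobSq (C - C * (W * Wᵀ)) = frobSq C := by
    rw [frobSq_eq_trace, frobSq_eq_trace, frobSq_eq_trace]
    simp only [Matrix.transpose_sub, Matrix.transpose_mul, Matrix.transpose_transpose]
    rw [Matrix.sub_mul, Matrix.mul_sub, Matrix.mul_sub, Matrix.trace_sub, Matrix.trace_sub,
      Matrix.trace_sub]
    simp only [Matrix.mul_assoc]
    have h1 : (Wᵀ * (Cᵀ * (C * W))).trace = (Cᵀ * (C * (W * Wᵀ))).trace := by
      rw [Matrix.trace_mul_comm Wᵀ]; simp only [Matrix.mul_assoc]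
    have h3 : (W * (Wᵀ * (Cᵀ * (C * (W * Wᵀ))))).trace = (Cᵀ * (C * (W * Wᵀ))).trace := by
      rw [Matrix.trace_mul_comm W]; simp only [Matrix.mul_assoc, hW, Matrix.mul_one]
      exact h1
    have h2 : (W * (Wᵀ * (Cᵀ * C))).trace = (Cᵀ * (C * (W * Wᵀ))).trace := by
      rw [Matrix.trace_mul_comm W]; simp only [Matrix.mul_assoc]
      exact h1
    rw [h1, h2, h3]; ring
  have := frobSq_nonneg (C - C * (W * Wᵀ))
  linarith

lemma frobSq_rectDiag (I O : ℕ) (s : ℕ → ℝ) :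
    frobSq (rectDiag I O s) = ∑ i ∈ Finset.range (min I O), s i ^ 2 := by
  unfold frobSq rectDiag
  simp only [Matrix.of_apply]
  have : ∀ i : Fin I, ∑ j : Fin O, (if (i : ℕ) = (j : ℕ) then s (i:ℕ) else 0) ^ 2
      = if (i : ℕ) < O then s (i:ℕ) ^ 2 else 0 := by
    intro i
    rw [Fin.sum_univ_eq_sum_range (fun j => (if (i : ℕ) = j then s (i:ℕ) else 0) ^ 2)]
    simp only [ite_pow, zero_pow, two_ne_zero, ne_eq, not_false_iff]
    rw [Finset.sum_ite_eq (Finset.range O) (i : ℕ) (fun _ => s (i:ℕ) ^ 2)]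
    simp [Finset.mem_range]
  simp only [this]
  rw [Fin.sum_univ_eq_sum_range (fun i => if i < O then s i ^ 2 else 0)]
  rw [← Finset.sum_filter]
  congr 1
  ext x
  simp [Finset.mem_filter, Finset.mem_range, Nat.lt_min]

lemma rearrange (c t : ℕ → ℝ) (N P : ℕ) (hPN : P ≤ N)
    (hc0 : ∀ i, 0 ≤ c i) (hcmono : ∀ i j : ℕ, i ≤ j → c j ≤ c i)
    (ht0 : ∀ i, 0 ≤ t i) (ht1 : ∀ i, t i ≤ 1)
    (hsum : (N : ℝ) - P ≤ ∑ i ∈ Finset.range N, t i) :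
    ∑ i ∈ Finset.Ico P N, c i ≤ ∑ i ∈ Finset.range N, c i * t i := by
  have hsplit : ∑ i ∈ Finset.range N, t i
      = ∑ i ∈ Finset.range P, t i + ∑ i ∈ Finset.Ico P N, t i := by
    simp only [Finset.range_eq_Ico]
    rw [Finset.sum_Ico_consecutive _ (Nat.zero_le P) hPN]
  have hsplitc : ∑ i ∈ Finset.range N, c i * t i
      = ∑ i ∈ Finset.range P, c i * t i + ∑ i ∈ Finset.Ico P N, c i * t i := by
    simp only [Finset.range_eq_Ico]
    rw [Finset.sum_Ico_consecutive _ (Nat.zero_le P) hPN]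
  have hA : c P * ∑ i ∈ Finset.range P, t i ≤ ∑ i ∈ Finset.range P, c i * t i := by
    rw [Finset.mul_sum]
    apply Finset.sum_le_sum
    intro i hi
    exact mul_le_mul_of_nonneg_right (hcmono i P (le_of_lt (Finset.mem_range.1 hi))) (ht0 i)
  have hB : ∑ i ∈ Finset.Ico P N, c i * (1 - t i)
      ≤ c P * ∑ i ∈ Finset.Ico P N, (1 - t i) := by
    rw [Finset.mul_sum]
    apply Finset.sum_le_sum
    intro i hi
    exact mul_le_mul_of_nonneg_right (hcmono P i (Finset.mem_Ico.1 hi).1)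
      (by linarith [ht1 i])
  have hC : ∑ i ∈ Finset.Ico P N, (1 - t i)
      = ((N : ℝ) - P) - ∑ i ∈ Finset.Ico P N, t i := by
    rw [Finset.sum_sub_distrib]
    simp [Nat.card_Ico, Nat.cast_sub hPN]
  have hD : c P * (((N : ℝ) - P) - ∑ i ∈ Finset.Ico P N, t i)
      ≤ c P * ∑ i ∈ Finset.range P, t i := by
    apply mul_le_mul_of_nonneg_left _ (hc0 P)
    linarith [hsplit ▸ hsum]
  have hE : ∑ i ∈ Finset.Ico P N, c i - ∑ i ∈ Finset.Ico P N, c i * t i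
      = ∑ i ∈ Finset.Ico P N, c i * (1 - t i) := by
    rw [← Finset.sum_sub_distrib]
    congr 1; ext i; ring
  rw [hC] at hB
  rw [hsplitc]
  linarith [hA, hB, hD, hE]

lemma exists_isometry_ker {M N : ℕ} (B : Matrix (Fin M) (Fin N) ℝ) :
    ∃ (d : ℕ) (W : Matrix (Fin N) (Fin d) ℝ), Wᵀ * W = 1 ∧ B * W = 0 ∧ N ≤ d + B.rank := by
  classical
  let eN := (EuclideanSpace.equiv (Fin N) ℝ).toLinearEquiv
  let eM := (EuclideanSpace.equiv (Fin M) ℝ).toLinearEquiv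
  let L : EuclideanSpace ℝ (Fin N) →ₗ[ℝ] EuclideanSpace ℝ (Fin M) :=
    eM.symm.toLinearMap ∘ₗ B.mulVecLin ∘ₗ eN.toLinearMap
  have hrange : Module.finrank ℝ (LinearMap.range L) = B.rank := by
    have h1 : LinearMap.range (B.mulVecLin ∘ₗ eN.toLinearMap) = LinearMap.range B.mulVecLin :=
      LinearMap.range_comp_of_range_eq_top _ eN.range
    have h2 : LinearMap.range L
        = Submodule.map eM.symm.toLinearMap (LinearMap.range (B.mulVecLin ∘ₗ eN.toLinearMap)) := by
      rw [← LinearMap.range_comp]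
    rw [h2, h1, LinearEquiv.finrank_map_eq]
    rfl
  have hdim : N ≤ Module.finrank ℝ (LinearMap.ker L) + B.rank := by
    have h := LinearMap.finrank_range_add_finrank_ker L
    rw [hrange, finrank_euclideanSpace, Fintype.card_fin] at h
    omega
  set K := LinearMap.ker L with hK
  set d := Module.finrank ℝ K with hd
  let ob := stdOrthonormalBasis ℝ K
  let w : Fin d → Fin N → ℝ := fun k => eN (ob k : EuclideanSpace ℝ (Fin N))
  have hin : ∀ x y : EuclideanSpace ℝ (Fin N),
      (inner ℝ x y : ℝ) = ∑ j, eN x j * eN y j := by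
    intro x y
    rw [PiLp.inner_apply]
    simp only [RCLike.inner_apply, conj_trivial]
    exact Finset.sum_congr rfl fun j _ => mul_comm _ _
  have hmv : ∀ k, B.mulVec (w k) = 0 := by
    intro k
    have hker : L (ob k : EuclideanSpace ℝ (Fin N)) = 0 := (ob k).2
    have h2 : B.mulVecLin (eN (ob k : EuclideanSpace ℝ (Fin N))) = eM (L (ob k : EuclideanSpace ℝ (Fin N))) := by
      simp only [L, LinearMap.coe_comp, Function.comp_apply, LinearEquiv.coe_coe,
        LinearEquiv.apply_symm_apply]
    rw [hker, map_zero] at h2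
    simpa [Matrix.mulVecLin_apply] using h2
  refine ⟨d, Matrix.of (fun j k => w k j), ?_, ?_, hdim⟩
  · ext k l
    have horth := orthonormal_iff_ite.mp ob.orthonormal k l
    rw [Submodule.coe_inner, hin] at horth
    simp only [Matrix.mul_apply, Matrix.transpose_apply, Matrix.of_apply]
    rw [Matrix.one_apply]
    exact horth
  · ext i k
    have h0 := congrFun (hmv k) i
    simp only [Matrix.mulVec, dotProduct, Pi.zero_apply] at h0
    simp only [Matrix.mul_apply, Matrix.of_apply, Matrix.zero_apply]
    exact h0

lemma rectDiag_mul_apply {I O d : ℕ} (s : ℕ → ℝ) (G : Matrix (Fin O) (Fin d) ℝ)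
    (i : Fin I) (k : Fin d) :
    (rectDiag I O s * G) i k = if h : (i : ℕ) < O then s (i : ℕ) * G ⟨(i : ℕ), h⟩ k else 0 := by
  rw [Matrix.mul_apply]
  split
  · next h =>
    rw [Finset.sum_eq_single ⟨(i : ℕ), h⟩]
    · simp [rectDiag]
    · intro j _ hj
      have : (i : ℕ) ≠ (j : ℕ) := fun hc => hj (by ext; exact hc.symm)
      simp [rectDiag, this]
    · simp
  · next h =>
    apply Finset.sum_eq_zero
    intro j _
    have : (i : ℕ) ≠ (j : ℕ) := fun hc => h (hc ▸ j.2)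
    simp [rectDiag, this]

lemma frobSq_rectDiag_mul {I O d : ℕ} (s : ℕ → ℝ) (G : Matrix (Fin O) (Fin d) ℝ) :
    frobSq (rectDiag I O s * G)
      = ∑ i ∈ Finset.range I,
          s i ^ 2 * (if h : i < O then ∑ k, G ⟨i, h⟩ k ^ 2 else 0) := by
  unfold frobSq
  have : ∀ i : Fin I, ∑ k, ((rectDiag I O s * G) i k) ^ 2
      = s (i : ℕ) ^ 2 * (if h : (i : ℕ) < O then ∑ k, G ⟨(i : ℕ), h⟩ k ^ 2 else 0) := by
    intro i
    simp only [rectDiag_mul_apply]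
    split
    · next h => simp [mul_pow, Finset.mul_sum]
    · next h => simp
  simp only [this]
  exact Fin.sum_univ_eq_sum_range (fun i => s i ^ 2 * (if h : i < O then ∑ k, G ⟨i, h⟩ k ^ 2 else 0)) I

lemma rowsq_le_one {n d : ℕ} (G : Matrix (Fin n) (Fin d) ℝ) (hG : Gᵀ * G = 1) (i : Fin n) :
    ∑ k, G i k ^ 2 ≤ 1 := by
  set Q := G * Gᵀ with hQdef
  have hQsymm : Qᵀ = Q := by rw [hQdef, Matrix.transpose_mul, Matrix.transpose_transpose]
  have hQQ : Q * Q = Q := by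
    rw [hQdef, Matrix.mul_assoc, ← Matrix.mul_assoc Gᵀ, hG, Matrix.one_mul]
  have hQii : Q i i = ∑ k, G i k ^ 2 := by
    simp [hQdef, Matrix.mul_apply, pow_two]
  have h1 : Q i i = ∑ j, Q i j ^ 2 := by
    conv_lhs => rw [← hQQ]
    rw [Matrix.mul_apply]
    congr 1; ext j
    have : Q j i = Q i j := by
      nth_rewrite 1 [← hQsymm]
      rw [Matrix.transpose_apply]
    rw [this, pow_two]
  have h2 : Q i i ^ 2 ≤ ∑ j, Q i j ^ 2 :=
    Finset.single_le_sum (f := fun j => Q i j ^ 2) (fun j _ => sq_nonneg _)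
      (Finset.mem_univ i)
  have h3 : 0 ≤ Q i i := by rw [hQii]; positivity
  nlinarith [h1, h2, h3, hQii]

lemma rowsq_sum {n d : ℕ} (G : Matrix (Fin n) (Fin d) ℝ) (hG : Gᵀ * G = 1) :
    ∑ i, ∑ k, G i k ^ 2 = (d : ℝ) := by
  have : ∑ i, ∑ k, G i k ^ 2 = Matrix.trace (Gᵀ * G) := by
    rw [Matrix.trace]
    simp only [Matrix.diag, Matrix.mul_apply, Matrix.transpose_apply, pow_two]
    rw [Finset.sum_comm]
  rw [this, hG, Matrix.trace_one]
  simp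

/-- Eckart–Young–Mirsky theorem in Frobenius norm: the SVD truncation `T_P(A)` is a best
rank-`P` approximation of `A`, and the minimum squared error is the tail sum of squared
singular values. -/
theorem eckart_young_mirsky {M N : ℕ}
    (A : Matrix (Fin M) (Fin N) ℝ)
    -- an SVD `A = U Σ Vᵀ` with nonincreasing nonnegative singular values `s`
    (U : Matrix (Fin M) (Fin M) ℝ) (V : Matrix (Fin N) (Fin N) ℝ) (s : ℕ → ℝ)
    (hU : Uᵀ * U = 1) (hV : Vᵀ * V = 1)
    (hs0 : ∀ i, 0 ≤ s i) (hsmono : ∀ i j : ℕ, i ≤ j → s j ≤ s i)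
    (hszero : ∀ i, min M N ≤ i → s i = 0)
    (hSVD : A = U * rectDiag M N s * Vᵀ)
    (P : ℕ) (hP : P < min M N) :
    letI TP : Matrix (Fin M) (Fin N) ℝ :=
      U * rectDiag M N (fun i => if i < P then s i else 0) * Vᵀ
    (∀ B : Matrix (Fin M) (Fin N) ℝ, B.rank ≤ P →
        ∑ i ∈ Finset.Ico P (min M N), (s i) ^ 2 ≤ frobSq (A - B)) ∧
      TP.rank ≤ P ∧
      frobSq (A - TP) = ∑ i ∈ Finset.Ico P (min M N), (s i) ^ 2 := by
  have hVVT : V * Vᵀ = 1 := mul_eq_one_comm.mp hV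
  have hPmin : P ≤ min M N := hP.le
  have hPN : P ≤ N := le_trans hPmin (min_le_right M N)
  have hminN : min M N ≤ N := min_le_right M N
  have hminM : min M N ≤ M := min_le_left M N
  refine ⟨?_, ?_, ?_⟩
  · -- lower bound
    intro B hB
    obtain ⟨d, W, hW, hBW, hNd⟩ := exists_isometry_ker B
    set G := Vᵀ * W with hGdef
    have hGG : Gᵀ * G = 1 := by
      rw [hGdef, Matrix.transpose_mul, Matrix.transpose_transpose, Matrix.mul_assoc,
        ← Matrix.mul_assoc V, hVVT, Matrix.one_mul, hW]
    have h2 : (A - B) * W = A * W := by rw [Matrix.sub_mul, hBW, sub_zero]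
    have h3 : frobSq (A * W) = frobSq (rectDiag M N s * G) := by
      have hAW : A * W = U * (rectDiag M N s * G) := by
        rw [hSVD, hGdef]
        simp only [Matrix.mul_assoc]
      rw [hAW, frobSq_mul_left U hU]
    set t : ℕ → ℝ := fun i => if h : i < N then ∑ k, G ⟨i, h⟩ k ^ 2 else 0 with htdef
    have ht0 : ∀ i, 0 ≤ t i := by
      intro i; rw [htdef]; dsimp only; split
      · positivity
      · exact le_refl 0
    have ht1 : ∀ i, t i ≤ 1 := by
      intro i; rw [htdef]; dsimp only; split
      · exact rowsq_le_one G hGG _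
      · norm_num
    have htsum : ∑ i ∈ Finset.range N, t i = (d : ℝ) := by
      rw [← rowsq_sum G hGG, ← Fin.sum_univ_eq_sum_range]
      congr 1; ext i
      rw [htdef]; dsimp only
      rw [dif_pos i.2]
    have hfrob : frobSq (rectDiag M N s * G) = ∑ i ∈ Finset.range M, s i ^ 2 * t i := by
      rw [frobSq_rectDiag_mul]
    have hMN : ∑ i ∈ Finset.range M, s i ^ 2 * t i = ∑ i ∈ Finset.range N, s i ^ 2 * t i := by
      have e1 : ∑ i ∈ Finset.range M, s i ^ 2 * t i
          = ∑ i ∈ Finset.range (max M N), s i ^ 2 * t i := by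
        apply Finset.sum_subset (Finset.range_subset_range.2 (le_max_left M N))
        intro i _ hi
        rw [Finset.mem_range, not_lt] at hi
        rw [hszero i (le_trans hminM hi)]
        ring
      have e2 : ∑ i ∈ Finset.range N, s i ^ 2 * t i
          = ∑ i ∈ Finset.range (max M N), s i ^ 2 * t i := by
        apply Finset.sum_subset (Finset.range_subset_range.2 (le_max_right M N))
        intro i _ hi
        rw [Finset.mem_range, not_lt] at hi
        have : t i = 0 := by rw [htdef]; dsimp only; rw [dif_neg (by omega)]
        rw [this]; ring
      rw [e1, e2]
    have hre : ∑ i ∈ Finset.Ico P N, s i ^ 2 ≤ ∑ i ∈ Finset.range N, s i ^ 2 * t i := by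
      apply rearrange _ _ N P hPN
      · intro i; positivity
      · intro i j hij; exact pow_le_pow_left₀ (hs0 j) (hsmono i j hij) 2
      · exact ht0
      · exact ht1
      · rw [htsum]
        have : (N : ℝ) ≤ (d : ℝ) + (P : ℝ) := by
          have : N ≤ d + P := le_trans hNd (by omega)
          exact_mod_cast this
        linarith
    have htail : ∑ i ∈ Finset.Ico P (min M N), s i ^ 2 = ∑ i ∈ Finset.Ico P N, s i ^ 2 := by
      rw [← Finset.sum_Ico_consecutive (fun i => s i ^ 2) hPmin hminN]
      have : ∑ i ∈ Finset.Ico (min M N) N, s i ^ 2 = 0 := by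
        apply Finset.sum_eq_zero
        intro i hi
        rw [hszero i (Finset.mem_Ico.1 hi).1]
        ring
      rw [this, add_zero]
    calc ∑ i ∈ Finset.Ico P (min M N), s i ^ 2
        = ∑ i ∈ Finset.Ico P N, s i ^ 2 := htail
      _ ≤ ∑ i ∈ Finset.range N, s i ^ 2 * t i := hre
      _ = ∑ i ∈ Finset.range M, s i ^ 2 * t i := hMN.symm
      _ = frobSq (rectDiag M N s * G) := hfrob.symm
      _ = frobSq (A * W) := h3.symm
      _ = frobSq ((A - B) * W) := by rw [h2]
      _ ≤ frobSq (A - B) := frobSq_mul_isometry_le _ W hW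
  · -- rank bound
    set E : Matrix (Fin M) (Fin P) ℝ :=
      Matrix.of (fun i k => if (i : ℕ) = (k : ℕ) then (1 : ℝ) else 0) with hE
    set F : Matrix (Fin P) (Fin N) ℝ :=
      Matrix.of (fun k j => if (k : ℕ) = (j : ℕ) then s (k : ℕ) else 0) with hF
    have hEF : rectDiag M N (fun i => if i < P then s i else 0) = E * F := by
      ext i j
      rw [Matrix.mul_apply]
      simp only [hE, hF, Matrix.of_apply, ite_mul, one_mul, zero_mul]
      rw [Fin.sum_univ_eq_sum_range
        (fun k => if (i : ℕ) = k then (if k = (j : ℕ) then s k else 0) else 0) P]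
      rw [Finset.sum_ite_eq (Finset.range P) (i : ℕ)
        (fun k => if k = (j : ℕ) then s k else 0)]
      simp only [Finset.mem_range, rectDiag, Matrix.of_apply]
      split_ifs <;> simp_all
    rw [hEF]
    calc (U * (E * F) * Vᵀ).rank ≤ (U * (E * F)).rank := Matrix.rank_mul_le_left _ _
      _ ≤ (E * F).rank := Matrix.rank_mul_le_right _ _
      _ ≤ F.rank := Matrix.rank_mul_le_right _ _
      _ ≤ P := by simpa using F.rank_le_card_height
  · -- equality
    have hdiff : A - U * rectDiag M N (fun i => if i < P then s i else 0) * Vᵀ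
        = U * rectDiag M N (fun i => if i < P then 0 else s i) * Vᵀ := by
      rw [hSVD, ← Matrix.sub_mul, ← Matrix.mul_sub]
      congr 2
      ext i j
      simp only [Matrix.sub_apply, rectDiag, Matrix.of_apply]
      split_ifs <;> ring
    rw [hdiff, frobSq_mul_right V hV, frobSq_mul_left U hU, frobSq_rectDiag]
    rw [Finset.range_eq_Ico, ← Finset.sum_Ico_consecutive _ (Nat.zero_le P) hPmin]
    have h0 : ∑ i ∈ Finset.Ico 0 P, (if i < P then (0:ℝ) else s i) ^ 2 = 0 := by
      apply Finset.sum_eq_zero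
      intro i hi
      rw [if_pos (Finset.mem_Ico.1 hi).2]
      ring
    rw [h0, zero_add]
    apply Finset.sum_congr rfl
    intro i hi
    rw [if_neg (by exact not_lt.2 (Finset.mem_Ico.1 hi).1)]
end
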